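/- arXiv:math/0609575 — 2 statements merged into one kernel-verified Lean document; each statement's English description precedes it below -/
import Mathlib

section
/- Every R-linear derivation of Mat_n(R), for R a commutative ring with n invertible, is inner; moreover the map ad restricted to trace-zero matrices sl_n(R) → Der_R(Mat_n(R)) is an isomorphism of Lie algebras. -/
/-!
With matrix units `E i j` and a fixed index `o`, the Leibniz rule applied to
`E i j = E i o * E o j` gives `D (E i j) = x * E i j + E i j * y`, where
`x = ∑ₖ D (E k o) * E o k` and `y = ∑ₖ E k o * D (E o k)`; applied to
`1 = ∑ₖ E k o * E o k` it gives `x + y = D 1 = 0`. Hence `D = ad x` on a basis, so everywhere.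
Two matrices with the same commutators differ by a central, i.e. scalar, matrix, and since
`n` is invertible a scalar matrix is determined by its trace; subtracting
`(trace x / n) • 1` therefore normalizes `x` to the unique trace-zero choice.
-/

open Matrix

namespace Matrix

variable {R m : Type*} [CommRing R] [Fintype m] [DecidableEq m]

theorem exists_eq_mul_sub_mul_of_leibniz (D : Matrix m m R →ₗ[R] Matrix m m R)
    (hD : ∀ a b, D (a * b) = D a * b + a * D b) :
    ∃ x : Matrix m m R, ∀ b, D b = x * b - b * x := by
  cases isEmpty_or_nonempty m
  · exact ⟨0, fun _ => Subsingleton.elim _ _⟩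
  obtain ⟨o⟩ := ‹Nonempty m›
  let E : m → m → Matrix m m R := fun i j => single i j 1
  have hE : ∀ i j k l, E i j * E k l = if j = k then E i l else 0 := by
    intro i j k l
    split_ifs with h
    · subst h; simp [E]
    · simp [E, h]
  have hD1 : D 1 = 0 := by simpa using hD 1 1
  let x := ∑ k, D (E k o) * E o k
  let y := ∑ k, E k o * D (E o k)
  have hxy : y = -x := by
    rw [eq_neg_iff_add_eq_zero, add_comm, ← Finset.sum_add_distrib]
    simp_rw [← hD, ← map_sum, hE, if_pos, E, sum_single_one, hD1]
  have hx : ∀ i j, x * E i j = D (E i o) * E o j := by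
    intro i j
    simp_rw [x, Finset.sum_mul, mul_assoc, hE, mul_ite, mul_zero, Finset.sum_ite_eq']
    simp
  have hy : ∀ i j, E i j * y = E i o * D (E o j) := by
    intro i j
    simp_rw [y, Finset.mul_sum, ← mul_assoc, hE, ite_mul, zero_mul, Finset.sum_ite_eq]
    simp
  refine ⟨x, fun b => ?_⟩
  suffices D = LinearMap.mulLeft R x - LinearMap.mulRight R x by simp [this]
  refine ext_linearMap R fun i j => LinearMap.ext_ring ?_
  change D (E i j) = x * E i j - E i j * x
  calc D (E i j) = D (E i o) * E o j + E i o * D (E o j) := by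
        rw [← hD, hE, if_pos rfl]
    _ = x * E i j - E i j * x := by
        rw [hx, ← hy, hxy, mul_neg, sub_eq_add_neg]

theorem eq_of_trace_eq_of_forall_mul_sub_mul_eq (hm : IsUnit (Fintype.card m : R))
    {x y : Matrix m m R} (htr : trace x = trace y)
    (h : ∀ b, x * b - b * x = y * b - b * y) : x = y := by
  have hcomm : ∀ b, Commute b (x - y) := fun b => by
    rw [Commute, SemiconjBy, sub_mul, mul_sub, eq_comm, sub_eq_sub_iff_sub_eq_sub]
    exact h b
  obtain ⟨r, hr⟩ := mem_range_scalar_iff_commute_single'.mpr fun i j => hcomm _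
  have htr' := congrArg trace hr
  rw [trace_sub, htr, sub_self, scalar_apply, trace_diagonal, Finset.sum_const,
    Finset.card_univ, nsmul_eq_mul, hm.mul_right_eq_zero] at htr'
  rwa [htr', map_zero, eq_comm, sub_eq_zero] at hr

theorem exists_trace_eq_zero_mul_sub_mul_eq (hm : IsUnit (Fintype.card m : R))
    (a : Matrix m m R) :
    ∃ x : Matrix m m R, trace x = 0 ∧ ∀ b, x * b - b * x = a * b - b * a := by
  refine ⟨a - (hm.unit⁻¹ * trace a : R) • 1, ?_, fun b => ?_⟩
  · rw [trace_sub, trace_smul, trace_one, smul_eq_mul, mul_right_comm, IsUnit.val_inv_mul,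
      one_mul, sub_self]
  · simp only [sub_mul, mul_sub, smul_mul_assoc, mul_smul_comm, one_mul, mul_one]
    abel

end Matrix

/-- For `R` a commutative ring with `n` invertible, every `R`-linear derivation of
`Mat_n(R)` is inner, given by `ad` of a unique trace-zero matrix; i.e.
`ad : sl_n(R) → Der_R(Mat_n(R))` is an isomorphism (it is injective on trace-zero
matrices and hits every derivation). -/
theorem matrix_derivations_inner (R : Type*) [CommRing R] (n : ℕ)
    (hn : IsUnit (n : R)) :
    (∀ D : Matrix (Fin n) (Fin n) R →ₗ[R] Matrix (Fin n) (Fin n) R,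
      (∀ a b : Matrix (Fin n) (Fin n) R, D (a * b) = D a * b + a * D b) →
      ∃ x : Matrix (Fin n) (Fin n) R, Matrix.trace x = 0 ∧
        ∀ b : Matrix (Fin n) (Fin n) R, D b = x * b - b * x) ∧
    (∀ x y : Matrix (Fin n) (Fin n) R, Matrix.trace x = 0 → Matrix.trace y = 0 →
      (∀ b : Matrix (Fin n) (Fin n) R, x * b - b * x = y * b - b * y) → x = y) := by
  have hcard : IsUnit (Fintype.card (Fin n) : R) := by rwa [Fintype.card_fin]
  refine ⟨fun D hD => ?_, fun x y hx hy =>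
    eq_of_trace_eq_of_forall_mul_sub_mul_eq hcard (hx.trans hy.symm)⟩
  obtain ⟨a, ha⟩ := exists_eq_mul_sub_mul_of_leibniz D hD
  obtain ⟨x, hx, hxa⟩ := exists_trace_eq_zero_mul_sub_mul_eq hcard a
  exact ⟨x, hx, fun b => (ha b).trans (hxa b).symm⟩
end

section
/- Let R be a commutative ring and A = Mat_n(R). The cotrace map cotr : C^•(R, R) → C^•(A, A) defined by cotr(D)(a_1 ⊗ r_1, …, a_m ⊗ r_m) = a_1⋯a_m · D(r_1, …, r_m) (viewing A = Mat_n(k) ⊗ R elements as sums of a ⊗ r) is a morphism of complexes commuting with the Hochschild differentials. -/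
/-- Hochschild `m`-cochains on `A` (function model). -/
def Cochain (A : Type*) (m : ℕ) := (Fin m → A) → A

/-- The Hochschild differential on `m`-cochains:
`(δD)(a₀,…,a_m) = a₀D(a₁,…,a_m) + Σ (−1)^{i+1} D(…,a_i a_{i+1},…) + (−1)^{m+1} D(a₀,…,a_{m−1})a_m`. -/
def hochschildD {A : Type*} [Ring A] (m : ℕ) (D : Cochain A m) : Cochain A (m + 1) :=
  fun a =>
    a 0 * D (fun j => a j.succ) +
      ∑ i : Fin m, (-1 : ℤ) ^ ((i : ℕ) + 1) •
        D (fun j => if (j : ℕ) < (i : ℕ) then a j.castSucc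
            else if (j : ℕ) = (i : ℕ) then a j.castSucc * a j.succ
            else a j.succ) +
      (-1 : ℤ) ^ (m + 1) • (D (fun j => a j.castSucc) * a (Fin.last m))

/-- The cotrace map `cotr : C^•(R,R) → C^•(Mat_n(R), Mat_n(R))`: under the
identification `Mat_n(R) = Mat_n(k) ⊗ R`, `cotr(D)(a₁⊗r₁, …, a_m⊗r_m) =
(a₁⋯a_m) ⊗ D(r₁,…,r_m)`; in matrix entries,
`cotr(D)(A₁,…,A_m)_{i,j} = Σ_{paths i=p₀,…,p_m=j} D((A₁)_{p₀p₁}, …, (A_m)_{p_{m−1}p_m})`. -/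
def cotrace {R : Type*} [CommRing R] (n m : ℕ) (D : Cochain R m) :
    Cochain (Matrix (Fin n) (Fin n) R) m :=
  fun A => Matrix.of fun i j =>
    ∑ p : Fin (m + 1) → Fin n,
      if p 0 = i ∧ p (Fin.last m) = j then
        D (fun s => A s (p s.castSucc) (p s.succ))
      else 0

/-! In entries, `cotr D` sums `D` over index paths `i = p₀, …, p_m = j` through the matrices.
Each face of the Hochschild differential matches an operation on paths: the two outer faces
multiply by an entry of the first or last matrix and extend the path by one step at that end, while
the inner face `Aₖ Aₖ₊₁` expands, by multilinearity of `D` in that slot, into a sum over a vertex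
inserted between `pₖ` and `pₖ₊₁`. So `cotr` commutes with each face separately, hence with `δ`. -/

namespace Fin

variable {β : Type*} {N : ℕ}

lemma insertNth_apply_castSucc_of_castSucc_lt {l : Fin (N + 1)} {x : Fin N} (h : x.castSucc < l)
    (t : β) (p : Fin N → β) : insertNth (α := fun _ => β) l t p x.castSucc = p x := by
  rw [← succAbove_of_castSucc_lt l x h, insertNth_apply_succAbove]

lemma insertNth_apply_succ_of_le_castSucc {l : Fin (N + 1)} {x : Fin N} (h : l ≤ x.castSucc)
    (t : β) (p : Fin N → β) : insertNth (α := fun _ => β) l t p x.succ = p x := by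
  rw [← succAbove_of_le_castSucc l x h, insertNth_apply_succAbove]

end Fin

section PathSum

variable {ι M : Type*} [Fintype ι] [DecidableEq ι]

def pathSum [AddCommMonoid M] {m : ℕ} (i j : ι) (F : (Fin (m + 1) → ι) → M) : M :=
  ∑ p, if p 0 = i ∧ p (Fin.last m) = j then F p else 0

lemma pathSum_insertNth [AddCommMonoid M] {m : ℕ} (k : Fin m) (i j : ι)
    (F : (Fin (m + 2) → ι) → M) :
    pathSum i j (fun p => ∑ t, F (Fin.insertNth k.succ.castSucc t p)) = pathSum i j F := by
  set l : Fin (m + 2) := k.succ.castSucc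
  have hl0 : l ≠ 0 := by simp [l, Fin.ext_iff]
  have hll : l ≠ Fin.last (m + 1) := by simp [l, Fin.ext_iff]; omega
  have h0 (t : ι) (p : Fin (m + 1) → ι) : Fin.insertNth (α := fun _ => ι) l t p 0 = p 0 := by
    rw [← Fin.succAbove_ne_zero_zero hl0, Fin.insertNth_apply_succAbove]
  have hlast (t : ι) (p : Fin (m + 1) → ι) :
      Fin.insertNth (α := fun _ => ι) l t p (Fin.last (m + 1)) = p (Fin.last m) := by
    rw [← Fin.succAbove_ne_last_last hll, Fin.insertNth_apply_succAbove]
  unfold pathSum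
  rw [← Equiv.sum_comp (Fin.insertNthEquiv (fun _ => ι) l :
    ι × (Fin (m + 1) → ι) ≃ (Fin (m + 2) → ι)), Fintype.sum_prod_type, Finset.sum_comm]
  simp only [Fin.insertNthEquiv, Equiv.coe_fn_mk, h0, hlast, Finset.sum_ite_irrel,
    Finset.sum_const_zero]

variable [NonUnitalNonAssocSemiring M]

lemma sum_mul_pathSum {m : ℕ} (X : Matrix ι ι M) (i j : ι) (F : (Fin (m + 1) → ι) → M) :
    ∑ t, X i t * pathSum t j F =
      pathSum i j (fun q : Fin (m + 2) → ι => X (q 0) (q 1) * F (Fin.tail q)) := by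
  unfold pathSum
  rw [← Equiv.sum_comp (Fin.consEquiv fun _ => ι :
    ι × (Fin (m + 1) → ι) ≃ (Fin (m + 2) → ι)), Fintype.sum_prod_type]
  simp only [Fin.consEquiv, Equiv.coe_fn_mk, Fin.cons_zero, ← Fin.succ_last, Fin.cons_succ,
    Fin.tail_cons, Fin.cons_one, Finset.mul_sum, mul_ite, mul_zero, ite_and,
    Finset.sum_ite_irrel, Finset.sum_const_zero]
  rw [Finset.sum_comm]
  simp only [Finset.sum_ite_eq, Finset.sum_ite_eq', Finset.mem_univ, if_true]

lemma sum_pathSum_mul {m : ℕ} (X : Matrix ι ι M) (i j : ι) (F : (Fin (m + 1) → ι) → M) :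
    ∑ t, pathSum i t F * X t j =
      pathSum i j (fun q : Fin (m + 2) → ι =>
        F (Fin.init q) * X (q (Fin.last m).castSucc) (q (Fin.last (m + 1)))) := by
  unfold pathSum
  rw [← Equiv.sum_comp (Fin.snocEquiv fun _ => ι :
    ι × (Fin (m + 1) → ι) ≃ (Fin (m + 2) → ι)), Fintype.sum_prod_type]
  simp only [Fin.snocEquiv, Equiv.coe_fn_mk, Fin.snoc_apply_zero, Fin.snoc_last,
    Fin.snoc_castSucc, Fin.init_snoc, Finset.sum_mul, ite_mul, zero_mul, ite_and]
  rw [Finset.sum_comm]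
  conv_rhs => rw [Finset.sum_comm]
  simp only [Finset.sum_ite_irrel, Finset.sum_ite_eq, Finset.sum_ite_eq', Finset.mem_univ,
    if_true]

end PathSum

def mulAdjacent {M : Type*} [Mul M] {m : ℕ} (a : Fin (m + 1) → M) (k : Fin m) : Fin m → M :=
  fun j => if (j : ℕ) < k then a j.castSucc
    else if (j : ℕ) = k then a j.castSucc * a j.succ else a j.succ

lemma hochschildD_apply {A : Type*} [Ring A] (m : ℕ) (D : Cochain A m) (a : Fin (m + 1) → A) :
    hochschildD m D a = a 0 * D (Fin.tail a) + ∑ k : Fin m, (-1 : ℤ) ^ ((k : ℕ) + 1) •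
      D (mulAdjacent a k) + (-1 : ℤ) ^ (m + 1) • (D (Fin.init a) * a (Fin.last m)) :=
  rfl

section Matrix

variable {ι R : Type*} {m : ℕ}

def pathEntries (A : Fin m → Matrix ι ι R) (p : Fin (m + 1) → ι) : Fin m → R :=
  fun s => A s (p s.castSucc) (p s.succ)

lemma pathEntries_tail (A : Fin (m + 1) → Matrix ι ι R) (q : Fin (m + 2) → ι) :
    Fin.tail (pathEntries A q) = pathEntries (Fin.tail A) (Fin.tail q) := by
  funext s
  simp only [Fin.tail, pathEntries, Fin.succ_castSucc]

lemma pathEntries_init (A : Fin (m + 1) → Matrix ι ι R) (q : Fin (m + 2) → ι) :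
    Fin.init (pathEntries A q) = pathEntries (Fin.init A) (Fin.init q) := by
  funext s
  simp only [Fin.init, pathEntries, Fin.succ_castSucc]

lemma mulAdjacent_pathEntries_insertNth [Fintype ι] [Mul R] [AddCommMonoid R]
    (A : Fin (m + 1) → Matrix ι ι R) (p : Fin (m + 1) → ι) (k : Fin m) (t : ι) :
    mulAdjacent (pathEntries A (Fin.insertNth k.succ.castSucc t p)) k =
      Function.update (pathEntries (mulAdjacent A k) p) k
        (A k.castSucc (p k.castSucc) t * A k.succ t (p k.succ)) := by
  funext s
  rcases lt_trichotomy (s : ℕ) k with h | h | h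
  · simp only [mulAdjacent, pathEntries, Function.update_of_ne (Fin.ne_of_val_ne h.ne), if_pos h,
      Fin.succ_castSucc]
    rw [Fin.insertNth_apply_castSucc_of_castSucc_lt, Fin.insertNth_apply_castSucc_of_castSucc_lt]
    all_goals simp only [Fin.lt_def, Fin.val_castSucc, Fin.val_succ]; omega
  · obtain rfl := Fin.ext h
    simp only [mulAdjacent, pathEntries, Function.update_self, lt_irrefl, if_false, if_true,
      Fin.succ_castSucc, Fin.insertNth_apply_same]
    rw [Fin.insertNth_apply_castSucc_of_castSucc_lt, Fin.insertNth_apply_succ_of_le_castSucc]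
    all_goals simp only [Fin.lt_def, Fin.le_def, Fin.val_castSucc, Fin.val_succ]; omega
  · simp only [mulAdjacent, pathEntries, Function.update_of_ne (Fin.ne_of_val_ne h.ne'),
      if_neg (not_lt.mpr h.le), if_neg h.ne']
    rw [← Fin.succ_castSucc s, Fin.insertNth_apply_succ_of_le_castSucc,
      Fin.insertNth_apply_succ_of_le_castSucc]
    all_goals simp only [Fin.le_def, Fin.val_castSucc, Fin.val_succ]; omega

end Matrix

section Cotrace

variable {R : Type*} [CommRing R] {n m : ℕ}

lemma cotrace_apply (D : (Fin m → R) → R) (A : Fin m → Matrix (Fin n) (Fin n) R) (i j : Fin n) :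
    cotrace n m D A i j = pathSum i j (fun p => D (pathEntries A p)) :=
  rfl

lemma cotrace_add (D₁ D₂ : (Fin m → R) → R) (A : Fin m → Matrix (Fin n) (Fin n) R) :
    cotrace n m (fun a => D₁ a + D₂ a) A = cotrace n m D₁ A + cotrace n m D₂ A := by
  ext i j
  simp only [Matrix.add_apply, cotrace_apply, pathSum, ← Finset.sum_add_distrib, ite_add_ite,
    add_zero]

lemma cotrace_zsmul (z : ℤ) (D : (Fin m → R) → R) (A : Fin m → Matrix (Fin n) (Fin n) R) :
    cotrace n m (fun a => z • D a) A = z • cotrace n m D A := by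
  ext i j
  simp only [Matrix.smul_apply, cotrace_apply, pathSum, Finset.smul_sum, smul_ite, smul_zero]

lemma cotrace_sum {κ : Type*} (s : Finset κ) (D : κ → (Fin m → R) → R)
    (A : Fin m → Matrix (Fin n) (Fin n) R) :
    cotrace n m (fun a => ∑ k ∈ s, D k a) A = ∑ k ∈ s, cotrace n m (D k) A := by
  ext i j
  simp only [Matrix.sum_apply, cotrace_apply, pathSum]
  conv_rhs => rw [Finset.sum_comm]
  simp only [Finset.sum_ite_irrel, Finset.sum_const_zero]

lemma mul_cotrace_tail (D : (Fin m → R) → R) (A : Fin (m + 1) → Matrix (Fin n) (Fin n) R) :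
    A 0 * cotrace n m D (Fin.tail A) = cotrace n (m + 1) (fun a => a 0 * D (Fin.tail a)) A := by
  ext i j
  simp only [Matrix.mul_apply, cotrace_apply, pathEntries_tail]
  rw [sum_mul_pathSum]
  rfl

lemma cotrace_init_mul (D : (Fin m → R) → R) (A : Fin (m + 1) → Matrix (Fin n) (Fin n) R) :
    cotrace n m D (Fin.init A) * A (Fin.last m) =
      cotrace n (m + 1) (fun a => D (Fin.init a) * a (Fin.last m)) A := by
  ext i j
  simp only [Matrix.mul_apply, cotrace_apply, pathEntries_init]
  rw [sum_pathSum_mul]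
  rfl

lemma cotrace_mulAdjacent (D : MultilinearMap R (fun _ : Fin m => R) R)
    (A : Fin (m + 1) → Matrix (Fin n) (Fin n) R) (k : Fin m) :
    cotrace n m ⇑D (mulAdjacent A k) = cotrace n (m + 1) (fun a => D (mulAdjacent a k)) A := by
  ext i j
  simp only [cotrace_apply]
  rw [← pathSum_insertNth k]
  simp only [mulAdjacent_pathEntries_insertNth]
  refine congrArg (pathSum i j) (funext fun p => ?_)
  have hk : pathEntries (mulAdjacent A k) p k =
      ∑ t, A k.castSucc (p k.castSucc) t * A k.succ t (p k.succ) := by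
    simp [pathEntries, mulAdjacent, Matrix.mul_apply]
  rw [← D.map_update_sum, ← hk, Function.update_eq_self]

end Cotrace

/-- The cotrace map is a morphism of complexes: it commutes with the Hochschild
differentials, `δ(cotr D) = cotr(δ D)`, for any `R`-multilinear cochain `D`. -/
theorem cotrace_chain_map {R : Type*} [CommRing R] (n m : ℕ)
    (D : MultilinearMap R (fun _ : Fin m => R) R) :
    hochschildD m (cotrace n m ⇑D) = cotrace n (m + 1) (hochschildD m ⇑D) := by
  funext A
  rw [hochschildD_apply, mul_cotrace_tail, cotrace_init_mul]
  simp only [cotrace_mulAdjacent, ← cotrace_zsmul, ← cotrace_sum, ← cotrace_add]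
  rfl
end
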